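/- In the tensor algebra T(M) over a magmatic algebra with extended product ▷ and unshuffle coproduct Δ, the identity U ▷ (V ▷ W) = (U₍₁₎·(U₍₂₎▷V)) ▷ W holds for all U, V, W ∈ T(M). -/
import Mathlib


open TensorProduct TensorAlgebra

variable (k M : Type*) [CommRing k] [AddCommGroup M] [Module k M]

/-- The linear map sending `x ∈ M` to the primitive element `ι x ⊗ 1 + 1 ⊗ ι x`. -/
noncomputable def primMap : M →ₗ[k] TensorAlgebra k M ⊗[k] TensorAlgebra k M :=
  ((TensorProduct.mk k (TensorAlgebra k M) (TensorAlgebra k M)).flip 1).comp (ι k) +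
    (TensorProduct.mk k (TensorAlgebra k M) (TensorAlgebra k M) 1).comp (ι k)

/-- The unshuffle coproduct on the tensor algebra: the unique algebra morphism
`Δ : T(M) → T(M) ⊗ T(M)` for which every element of `M` is primitive. -/
noncomputable def unshuffle :
    TensorAlgebra k M →ₐ[k] TensorAlgebra k M ⊗[k] TensorAlgebra k M :=
  TensorAlgebra.lift k (primMap k M)

/-- The counit of the tensor algebra: the algebra morphism killing `M`. -/
noncomputable def counit : TensorAlgebra k M →ₐ[k] k :=
  TensorAlgebra.lift k (0 : M →ₗ[k] k)

/-- The Grossman–Larson product `U ∗ V := U₍₁₎ · (U₍₂₎ ▷ V)` on the tensor algebra,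
built from the unshuffle coproduct and the extended product `t`. -/
noncomputable def glProd {k M : Type*} [CommRing k] [AddCommGroup M] [Module k M]
    (t : TensorAlgebra k M →ₗ[k] TensorAlgebra k M →ₗ[k] TensorAlgebra k M)
    (U V : TensorAlgebra k M) : TensorAlgebra k M :=
  LinearMap.mul' k (TensorAlgebra k M)
    (TensorProduct.map LinearMap.id (t.flip V) (unshuffle k M U))

section Aux

variable {k M}

lemma unshuffle_ι (x : M) :
    unshuffle k M (ι k x) = ι k x ⊗ₜ[k] (1 : TensorAlgebra k M)
      + (1 : TensorAlgebra k M) ⊗ₜ[k] ι k x := by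
  simp [unshuffle, primMap, TensorAlgebra.lift_ι_apply]

lemma counit_ι (x : M) : counit k M (ι k x) = 0 := by
  simp [counit, TensorAlgebra.lift_ι_apply]



-- map d id and map id d are derivations on T ⊗ T when d is a derivation on T
lemma map_der_left {d : TensorAlgebra k M →ₗ[k] TensorAlgebra k M}
    (hd : ∀ a b, d (a * b) = d a * b + a * d b)
    (p q : TensorAlgebra k M ⊗[k] TensorAlgebra k M) :
    TensorProduct.map d LinearMap.id (p * q)
      = TensorProduct.map d LinearMap.id p * q + p * TensorProduct.map d LinearMap.id q := by
  induction p using TensorProduct.induction_on with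
  | zero => simp
  | tmul a b =>
    induction q using TensorProduct.induction_on with
    | zero => simp
    | tmul c e =>
      simp [Algebra.TensorProduct.tmul_mul_tmul, hd, TensorProduct.add_tmul]
    | add q1 q2 h1 h2 =>
      simp only [mul_add, map_add, h1, h2, add_mul]
      abel
  | add p1 p2 h1 h2 =>
    simp only [add_mul, map_add, h1, h2, mul_add]
    abel

lemma map_der_right {d : TensorAlgebra k M →ₗ[k] TensorAlgebra k M}
    (hd : ∀ a b, d (a * b) = d a * b + a * d b)
    (p q : TensorAlgebra k M ⊗[k] TensorAlgebra k M) :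
    TensorProduct.map LinearMap.id d (p * q)
      = TensorProduct.map LinearMap.id d p * q + p * TensorProduct.map LinearMap.id d q := by
  induction p using TensorProduct.induction_on with
  | zero => simp
  | tmul a b =>
    induction q using TensorProduct.induction_on with
    | zero => simp
    | tmul c e =>
      simp [Algebra.TensorProduct.tmul_mul_tmul, hd, TensorProduct.tmul_add]
    | add q1 q2 h1 h2 =>
      simp only [mul_add, map_add, h1, h2, add_mul]
      abel
  | add p1 p2 h1 h2 =>
    simp only [add_mul, map_add, h1, h2, mul_add]
    abel


lemma t_ι_one (t : TensorAlgebra k M →ₗ[k] TensorAlgebra k M →ₗ[k] TensorAlgebra k M)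
    (hcounit : ∀ U, t U 1 = algebraMap k (TensorAlgebra k M) (counit k M U)) (x : M) :
    t (ι k x) 1 = 0 := by
  rw [hcounit, counit_ι, map_zero]

lemma coderiv (m : M →ₗ[k] M →ₗ[k] M)
    (t : TensorAlgebra k M →ₗ[k] TensorAlgebra k M →ₗ[k] TensorAlgebra k M)
    (hbase : ∀ x y : M, t (ι k x) (ι k y) = ι k (m x y))
    (hcounit : ∀ U, t U 1 = algebraMap k (TensorAlgebra k M) (counit k M U))
    (hleib : ∀ (x : M) (V W : TensorAlgebra k M),
      t (ι k x) (V * W) = t (ι k x) V * W + V * t (ι k x) W)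
    (x : M) (U : TensorAlgebra k M) :
    unshuffle k M (t (ι k x) U)
      = TensorProduct.map (t (ι k x)) LinearMap.id (unshuffle k M U)
        + TensorProduct.map LinearMap.id (t (ι k x)) (unshuffle k M U) := by
  induction U using TensorAlgebra.induction with
  | algebraMap r =>
      have h1 : t (ι k x) (algebraMap k (TensorAlgebra k M) r) = 0 := by
        rw [Algebra.algebraMap_eq_smul_one, map_smul, t_ι_one t hcounit, smul_zero]
      rw [h1, map_zero, AlgHom.commutes]
      rw [Algebra.algebraMap_eq_smul_one (A := TensorAlgebra k M ⊗[k] TensorAlgebra k M),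
        Algebra.TensorProduct.one_def]
      simp [t_ι_one t hcounit]
  | ι y =>
      rw [hbase x y, unshuffle_ι, unshuffle_ι]
      simp only [map_add, TensorProduct.map_tmul, LinearMap.id_coe, id_eq,
        t_ι_one t hcounit, hbase, TensorProduct.zero_tmul, TensorProduct.tmul_zero]
      abel
  | mul u v ihu ihv =>
      rw [hleib, map_add, map_mul, map_mul, ihu, ihv, map_mul,
        map_der_left (fun a b => hleib x a b), map_der_right (fun a b => hleib x a b)]
      simp only [add_mul, mul_add]
      abel
  | add u v ihu ihv =>
      rw [map_add, map_add, map_add, map_add, map_add, ihu, ihv]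
      abel

lemma glE (m : M →ₗ[k] M →ₗ[k] M)
    (t : TensorAlgebra k M →ₗ[k] TensorAlgebra k M →ₗ[k] TensorAlgebra k M)
    (hbase : ∀ x y : M, t (ι k x) (ι k y) = ι k (m x y))
    (hcounit : ∀ U, t U 1 = algebraMap k (TensorAlgebra k M) (counit k M U))
    (hleib : ∀ (x : M) (V W : TensorAlgebra k M),
      t (ι k x) (V * W) = t (ι k x) V * W + V * t (ι k x) W)
    (hassoc : ∀ (x : M) (V W : TensorAlgebra k M),
      t (ι k x * V) W = t (ι k x) (t V W) - t (t (ι k x) V) W)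
    (x : M) (U V : TensorAlgebra k M) :
    glProd t (ι k x * U) V + glProd t (t (ι k x) U) V
      = ι k x * glProd t U V + t (ι k x) (glProd t U V) := by
  have key :
      (LinearMap.mul' k (TensorAlgebra k M) ∘ₗ TensorProduct.map LinearMap.id (t.flip V) ∘ₗ
          LinearMap.mulLeft k (ι k x ⊗ₜ[k] (1 : TensorAlgebra k M)
            + (1 : TensorAlgebra k M) ⊗ₜ[k] ι k x))
        + (LinearMap.mul' k (TensorAlgebra k M) ∘ₗ TensorProduct.map LinearMap.id (t.flip V) ∘ₗ
            (TensorProduct.map (t (ι k x)) LinearMap.id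
              + TensorProduct.map LinearMap.id (t (ι k x))))
      = (LinearMap.mulLeft k (ι k x) ∘ₗ LinearMap.mul' k (TensorAlgebra k M) ∘ₗ
            TensorProduct.map LinearMap.id (t.flip V))
        + (t (ι k x) ∘ₗ LinearMap.mul' k (TensorAlgebra k M) ∘ₗ
            TensorProduct.map LinearMap.id (t.flip V)) := by
    apply TensorProduct.ext'
    intro u v
    simp only [LinearMap.add_apply, LinearMap.comp_apply, LinearMap.mulLeft_apply,
      add_mul, Algebra.TensorProduct.tmul_mul_tmul, one_mul, mul_one,
      map_add, TensorProduct.map_tmul, LinearMap.id_coe, id_eq, LinearMap.flip_apply,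
      LinearMap.mul'_apply]
    rw [hleib x u (t v V), hassoc x v V]
    noncomm_ring
  have hz := congrArg (fun f => f (unshuffle k M U)) key
  simp only [LinearMap.add_apply, LinearMap.comp_apply, LinearMap.mulLeft_apply] at hz
  unfold glProd
  rw [map_mul, unshuffle_ι, coderiv m t hbase hcounit hleib]
  exact hz
end Aux

noncomputable def Wd : ℕ → Submodule k (TensorAlgebra k M)
  | 0 => Submodule.span k {1}
  | n + 1 => Wd n ⊔ Submodule.span k {u | ∃ x w, w ∈ Wd n ∧ u = ι k x * w}

lemma Wd_zero : Wd k M 0 = Submodule.span k {1} := rfl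

lemma Wd_succ (n : ℕ) :
    Wd k M (n + 1) = Wd k M n ⊔ Submodule.span k {u | ∃ x w, w ∈ Wd k M n ∧ u = ι k x * w} :=
  rfl

lemma Wd_mono : Monotone (Wd k M) :=
  monotone_nat_of_le_succ fun n => by rw [Wd_succ]; exact le_sup_left

lemma one_mem_Wd : (1 : TensorAlgebra k M) ∈ Wd k M 0 :=
  Submodule.subset_span rfl

lemma ι_mul_mem_Wd {n : ℕ} (x : M) {w : TensorAlgebra k M} (hw : w ∈ Wd k M n) :
    ι k x * w ∈ Wd k M (n + 1) := by
  rw [Wd_succ]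
  exact Submodule.mem_sup_right (Submodule.subset_span ⟨x, w, hw, rfl⟩)

lemma Wd_mul : ∀ (a b : ℕ) (u : TensorAlgebra k M), u ∈ Wd k M a →
    ∀ v ∈ Wd k M b, u * v ∈ Wd k M (a + b) := by
  intro a
  induction a with
  | zero =>
      intro b u hu v hv
      have : Wd k M 0 ≤ Submodule.comap (LinearMap.mulRight k v) (Wd k M b) := by
        rw [Wd_zero, Submodule.span_le]
        rintro u rfl
        simpa using hv
      simpa using this hu
  | succ a ih =>
      intro b u hu v hv
      have : Wd k M (a + 1) ≤ Submodule.comap (LinearMap.mulRight k v) (Wd k M (a + 1 + b)) := by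
        rw [Wd_succ]
        apply sup_le
        · intro w hw
          simpa using Wd_mono k M (by omega : a + b ≤ a + 1 + b) (ih b w hw v hv)
        · rw [Submodule.span_le]
          rintro _ ⟨x, w, hw, rfl⟩
          simp only [SetLike.mem_coe, Submodule.mem_comap, LinearMap.mulRight_apply,
            mul_assoc]
          have := ι_mul_mem_Wd k M x (ih b w hw v hv)
          simpa [show a + b + 1 = a + 1 + b by omega] using this
      simpa using this hu

lemma Wd_t_ι (m : M →ₗ[k] M →ₗ[k] M)
    (t : TensorAlgebra k M →ₗ[k] TensorAlgebra k M →ₗ[k] TensorAlgebra k M)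
    (hbase : ∀ x y : M, t (ι k x) (ι k y) = ι k (m x y))
    (hcounit : ∀ U, t U 1 = algebraMap k (TensorAlgebra k M) (counit k M U))
    (hleib : ∀ (x : M) (V W : TensorAlgebra k M),
      t (ι k x) (V * W) = t (ι k x) V * W + V * t (ι k x) W)
    (x : M) : ∀ (n : ℕ) (w : TensorAlgebra k M), w ∈ Wd k M n → t (ι k x) w ∈ Wd k M n := by
  intro n
  induction n with
  | zero =>
      intro w hw
      have : Wd k M 0 ≤ Submodule.comap (t (ι k x)) (Wd k M 0) := by
        rw [Wd_zero, Submodule.span_le]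
        rintro w rfl
        simp only [Set.mem_setOf_eq, SetLike.mem_coe, Submodule.mem_comap,
          t_ι_one t hcounit]
        exact Submodule.zero_mem _
      exact this hw
  | succ n ih =>
      intro w hw
      have : Wd k M (n + 1) ≤ Submodule.comap (t (ι k x)) (Wd k M (n + 1)) := by
        rw [Wd_succ]
        apply sup_le
        · intro u hu
          exact Submodule.mem_comap.2 (Wd_mono k M (Nat.le_succ n) (ih u hu))
        · rw [Submodule.span_le]
          rintro _ ⟨y, u, hu, rfl⟩
          simp only [SetLike.mem_coe, Submodule.mem_comap, hleib x (ι k y) u, hbase]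
          exact add_mem (ι_mul_mem_Wd k M _ hu) (ι_mul_mem_Wd k M _ (ih u hu))
      exact this hw

lemma Wd_top (U : TensorAlgebra k M) : U ∈ ⨆ n, Wd k M n := by
  induction U using TensorAlgebra.induction with
  | algebraMap r =>
      apply Submodule.mem_iSup_of_mem 0
      rw [Algebra.algebraMap_eq_smul_one]
      exact Submodule.smul_mem _ _ (one_mem_Wd k M)
  | ι x =>
      apply Submodule.mem_iSup_of_mem 1
      simpa using ι_mul_mem_Wd k M x (one_mem_Wd k M)
  | mul a b ha hb =>
      rw [Submodule.mem_iSup_of_directed _ (Wd_mono k M).directed_le] at ha hb ⊢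
      obtain ⟨i, ha⟩ := ha
      obtain ⟨j, hb⟩ := hb
      exact ⟨i + j, Wd_mul k M i j a ha b hb⟩
  | add a b ha hb => exact add_mem ha hb

lemma glProd_zero_left {k M : Type*} [CommRing k] [AddCommGroup M] [Module k M]
    (t : TensorAlgebra k M →ₗ[k] TensorAlgebra k M →ₗ[k] TensorAlgebra k M)
    (V : TensorAlgebra k M) : glProd t 0 V = 0 := by
  simp [glProd]

lemma glProd_add_left {k M : Type*} [CommRing k] [AddCommGroup M] [Module k M]
    (t : TensorAlgebra k M →ₗ[k] TensorAlgebra k M →ₗ[k] TensorAlgebra k M)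
    (U₁ U₂ V : TensorAlgebra k M) :
    glProd t (U₁ + U₂) V = glProd t U₁ V + glProd t U₂ V := by
  simp [glProd, map_add]

lemma glProd_smul_left {k M : Type*} [CommRing k] [AddCommGroup M] [Module k M]
    (t : TensorAlgebra k M →ₗ[k] TensorAlgebra k M →ₗ[k] TensorAlgebra k M)
    (c : k) (U V : TensorAlgebra k M) :
    glProd t (c • U) V = c • glProd t U V := by
  simp [glProd, map_smul]

lemma glProd_one_left {k M : Type*} [CommRing k] [AddCommGroup M] [Module k M]
    (t : TensorAlgebra k M →ₗ[k] TensorAlgebra k M →ₗ[k] TensorAlgebra k M)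
    (hone : ∀ W, t 1 W = W) (V : TensorAlgebra k M) : glProd t 1 V = V := by
  simp [glProd, map_one, Algebra.TensorProduct.one_def, hone]

/-- In the tensor algebra over a magmatic algebra, with the extended
product `▷` (denoted `t`) and the unshuffle coproduct, the identity
`U ▷ (V ▷ W) = (U₍₁₎ · (U₍₂₎ ▷ V)) ▷ W` holds for all `U, V, W`. -/
theorem triangle_glProd_identity {k M : Type*} [CommRing k] [AddCommGroup M] [Module k M]
    (m : M →ₗ[k] M →ₗ[k] M)
    (t : TensorAlgebra k M →ₗ[k] TensorAlgebra k M →ₗ[k] TensorAlgebra k M)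
    (hone : ∀ W, t 1 W = W)
    (hcounit : ∀ U, t U 1 = algebraMap k (TensorAlgebra k M) (counit k M U))
    (hbase : ∀ x y : M, t (ι k x) (ι k y) = ι k (m x y))
    (hleib : ∀ (x : M) (V W : TensorAlgebra k M),
      t (ι k x) (V * W) = t (ι k x) V * W + V * t (ι k x) W)
    (hassoc : ∀ (x : M) (V W : TensorAlgebra k M),
      t (ι k x * V) W = t (ι k x) (t V W) - t (t (ι k x) V) W) :
    ∀ U V W : TensorAlgebra k M, t U (t V W) = t (glProd t U V) W := by
  set S : Submodule k (TensorAlgebra k M) :=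
    { carrier := {U | ∀ V W, t U (t V W) = t (glProd t U V) W}
      add_mem' := by
        intro a b ha hb V W
        rw [map_add, LinearMap.add_apply, ha V W, hb V W, glProd_add_left, map_add,
          LinearMap.add_apply]
      zero_mem' := by
        intro V W
        rw [map_zero, LinearMap.zero_apply, glProd_zero_left, map_zero,
          LinearMap.zero_apply]
      smul_mem' := by
        intro c a ha V W
        rw [map_smul, LinearMap.smul_apply, ha V W, glProd_smul_left, map_smul,
          LinearMap.smul_apply] } with hS
  have hWd : ∀ n, Wd k M n ≤ S := by
    intro n
    induction n with
    | zero =>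
        rw [Wd_zero, Submodule.span_le]
        rintro u rfl
        intro V W
        rw [hone, glProd_one_left t hone]
    | succ n ih =>
        rw [Wd_succ]
        apply sup_le ih
        rw [Submodule.span_le]
        rintro _ ⟨x, w, hw, rfl⟩
        have Pw : ∀ V W, t w (t V W) = t (glProd t w V) W := ih hw
        have Ptw : ∀ V W, t (t (ι k x) w) (t V W) = t (glProd t (t (ι k x) w) V) W :=
          ih (Wd_t_ι k M m t hbase hcounit hleib x n w hw)
        intro V W
        have hE := glE m t hbase hcounit hleib hassoc x w V
        have h2 : t (glProd t (ι k x * w) V) W + t (glProd t (t (ι k x) w) V) W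
            = t (ι k x * glProd t w V) W + t (t (ι k x) (glProd t w V)) W := by
          have := congrArg (fun z => t z W) hE
          simpa only [map_add, LinearMap.add_apply] using this
        rw [hassoc x (glProd t w V) W, sub_add_cancel] at h2
        rw [hassoc x w (t V W), Pw V W, Ptw V W]
        exact (eq_sub_of_add_eq h2).symm
  intro U V W
  exact (iSup_le hWd : (⨆ n, Wd k M n) ≤ S) (Wd_top k M U) V W
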